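/- For a Hermitian matrix U ∈ ℂ^{n×n} and ρ ∈ (0,1], if trace(U) − √(2 ln(1/ρ)) x + ln(ρ) y + u ≥ 0, √(‖U‖_F² + 2‖u_vec‖²) ≤ x, yI + U ⪰ 0, and y ≥ 0, then trace(U) − √(2 ln(1/ρ)) √(‖U‖_F² + 2‖u_vec‖²) + ln(ρ) λ⁺_max(−U) + u ≥ 0, where λ⁺_max(−U) = max(λ_max(−U), 0). -/

import Mathlib

open Matrix ComplexOrder

/-- The Rayleigh quotient of the `i`-th unit eigenvector is `λᵢ`, and `c • 1 - A ⪰ 0` bounds it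
by `c`. -/
theorem Matrix.IsHermitian.eigenvalues_le_of_posSemidef_smul_one_sub {𝕜 n : Type*} [RCLike 𝕜]
    [Fintype n] [DecidableEq n] {A : Matrix n n 𝕜} (hA : A.IsHermitian) {c : ℝ}
    (h : (c • (1 : Matrix n n 𝕜) - A).PosSemidef) (i : n) : hA.eigenvalues i ≤ c := by
  set v := ⇑(hA.eigenvectorBasis i)
  have hv : star v ⬝ᵥ v = 1 := by
    rw [dotProduct_comm, ← EuclideanSpace.inner_eq_star_dotProduct, inner_self_eq_norm_sq_to_K,
      hA.eigenvectorBasis.orthonormal.1 i]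
    simp
  have hquad := h.dotProduct_mulVec_nonneg v
  rw [sub_mulVec, smul_mulVec, one_mulVec, dotProduct_sub, dotProduct_smul, hv] at hquad
  rw [hA.eigenvalues_eq i]
  simpa [v, Algebra.smul_def] using (RCLike.nonneg_iff.mp hquad).1

theorem bernstein_restriction_implies_condition_general
    {n : Type*} [Fintype n] [DecidableEq n]
    (U : Matrix n n ℂ) (hU : U.IsHermitian)
    (uvec : n → ℂ) (u ρ x y : ℝ) (hρ : ρ ∈ Set.Ioc (0 : ℝ) 1)
    (h1 : (Matrix.trace U).re - Real.sqrt (2 * Real.log (1 / ρ)) * x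
            + Real.log ρ * y + u ≥ 0)
    (h2 : Real.sqrt ((∑ i, ∑ j, ‖U i j‖ ^ 2) + 2 * ∑ i, ‖uvec i‖ ^ 2) ≤ x)
    (h3 : (y • (1 : Matrix n n ℂ) + U).PosSemidef)
    (h4 : 0 ≤ y) :
    (Matrix.trace U).re
        - Real.sqrt (2 * Real.log (1 / ρ)) *
            Real.sqrt ((∑ i, ∑ j, ‖U i j‖ ^ 2) + 2 * ∑ i, ‖uvec i‖ ^ 2)
        + Real.log ρ * max (⨆ i, hU.neg.eigenvalues i) 0 + u ≥ 0 := by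
  have hlog : Real.log ρ ≤ 0 := Real.log_nonpos hρ.1.le hρ.2
  have heig (i : n) : hU.neg.eigenvalues i ≤ y :=
    hU.neg.eigenvalues_le_of_posSemidef_smul_one_sub (by rwa [sub_neg_eq_add]) i
  have hmax : max (⨆ i, hU.neg.eigenvalues i) 0 ≤ y := max_le (Real.iSup_le heig h4) h4
  have hnorm := mul_le_mul_of_nonneg_left h2 (Real.sqrt_nonneg (2 * Real.log (1 / ρ)))
  have hspec := mul_le_mul_of_nonpos_left hmax hlog
  linarith

theorem bernstein_restriction_implies_condition
    {n : Type*} [Fintype n] [DecidableEq n] [Nonempty n]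
    (U : Matrix n n ℂ) (hU : U.IsHermitian)
    (uvec : n → ℂ) (u ρ x y : ℝ) (hρ : ρ ∈ Set.Ioc (0 : ℝ) 1)
    (h1 : (Matrix.trace U).re - Real.sqrt (2 * Real.log (1 / ρ)) * x
            + Real.log ρ * y + u ≥ 0)
    (h2 : Real.sqrt ((∑ i, ∑ j, ‖U i j‖ ^ 2) + 2 * ∑ i, ‖uvec i‖ ^ 2) ≤ x)
    (h3 : (y • (1 : Matrix n n ℂ) + U).PosSemidef)
    (h4 : 0 ≤ y) :
    (Matrix.trace U).re
        - Real.sqrt (2 * Real.log (1 / ρ)) *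
            Real.sqrt ((∑ i, ∑ j, ‖U i j‖ ^ 2) + 2 * ∑ i, ‖uvec i‖ ^ 2)
        + Real.log ρ * max (⨆ i, hU.neg.eigenvalues i) 0 + u ≥ 0 :=
  bernstein_restriction_implies_condition_general U hU uvec u ρ x y hρ h1 h2 h3 h4
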